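/- On the generic Verma module V̂, the divided powers multiply according to the Gaussian binomial rule: for all n, m ≥ 1, as R-linear endomorphisms of V̂ one has F⁽ⁿ⁾ ∘ F⁽ᵐ⁾ = C(n+m, n)_q · F⁽ⁿ⁺ᵐ⁾. -/

import Mathlib

/-!
Setup: `R = ℤ[q^{±1}, s^{±1}]` realized as `AddMonoidAlgebra ℤ (ℤ × ℤ)`, where
`qp a b` denotes the monomial `q^a * s^b`.  The generic Verma module `V̂` is the
free `R`-module `ℕ →₀ R` with basis `(v i)`.
-/

noncomputable section ADO

/-- The ring `ℤ[q^{±1}, s^{±1}]`. -/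
abbrev Rqs : Type := AddMonoidAlgebra ℤ (ℤ × ℤ)

/-- The monomial `q^a s^b`. -/
def qp (a b : ℤ) : Rqs := AddMonoidAlgebra.single (a, b) 1

/-- The variable `q`. -/
def qvar : Rqs := qp 1 0

/-- The balanced quantum integer `[k]_q = ∑_{j=0}^{k-1} q^{k-1-2j}`. -/
def qint (k : ℕ) : Rqs := ∑ j ∈ Finset.range k, qp ((k : ℤ) - 1 - 2 * (j : ℤ)) 0

/-- The quantum factorial `[k]_q!`. -/
def qfact (k : ℕ) : Rqs := ∏ j ∈ Finset.range k, qint (j + 1)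

/-- The generic Verma module `V̂`, a free `Rqs`-module with basis indexed by `ℕ`. -/
abbrev Vhat : Type := ℕ →₀ Rqs

/-- The basis vector `v i` of the generic Verma module. -/
def v (i : ℕ) : Vhat := Finsupp.single i 1

/-!
On `v i` both sides are multiples of `v (i + n + m)`. The product of the factors
`s q^{-k-j} - s^{-1} q^{k+j}` over `n + m` steps from weight `i` splits into `m` steps from `i`
followed by `n` steps from `i + m`, and
`C(m+i, i) C(n+m+i, i+m) = C(n+m, n) C(n+m+i, i)` because both sides times `[i]! [m]! [n]!`
equal `[n+m+i]!`; cancelling is allowed since `[k]!` specializes to `k!` at `q = s = 1`.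
-/

-- the specialization `q, s ↦ 1`
def augmentation : Rqs →ₐ[ℤ] ℤ := AddMonoidAlgebra.lift ℤ ℤ (ℤ × ℤ) 1

@[simp]
lemma augmentation_qp (a b : ℤ) : augmentation (qp a b) = 1 := by
  simp [augmentation, qp, AddMonoidAlgebra.lift_single]

lemma augmentation_qint (k : ℕ) : augmentation (qint k) = k := by
  simp [qint]

lemma augmentation_qfact (k : ℕ) : augmentation (qfact k) = k.factorial := by
  simp only [qfact, map_prod, augmentation_qint]
  exact_mod_cast Finset.prod_range_add_one_eq_factorial k

lemma qfact_ne_zero (k : ℕ) : qfact k ≠ 0 := fun h => by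
  simpa [h, eq_comm, Nat.factorial_ne_zero] using augmentation_qfact k

lemma binom_mul_binom_of_mul_factorials {M : Type*} [CommRing M] [NoZeroDivisors M]
    (f : ℕ → M) (hf : ∀ k, f k ≠ 0) (C : ℕ → ℕ → M)
    (hC : ∀ a b : ℕ, b ≤ a → C a b * f b * f (a - b) = f a) (i m n : ℕ) :
    C (m + i) i * C (n + (i + m)) (i + m) = C (n + m) n * C (n + m + i) i := by
  have hC' : ∀ a b : ℕ, C (b + a) a * f a * f b = f (b + a) := fun a b => by
    simpa using hC (b + a) a (by omega)
  have h1 : C (m + i) i * f i * f m = f (i + m) := (hC' i m).trans (by rw [add_comm])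
  have h2 := hC' (i + m) n
  have h3 : C (n + m) n * f n * f m = f (n + m) := by simpa [add_comm] using hC' n m
  have h4 : C (n + m + i) i * f i * f (n + m) = f (n + m + i) := hC' i (n + m)
  rw [show n + (i + m) = n + m + i by omega] at h2 ⊢
  apply mul_right_cancel₀ (mul_ne_zero (mul_ne_zero (hf i) (hf m)) (hf n))
  linear_combination C (n + m + i) (i + m) * f n * h1 + h2
    - C (n + m + i) i * f i * h3 - h4

def vermaCoeff (n i : ℕ) : Rqs :=
  ∏ k ∈ Finset.range n, (qp (-(k : ℤ) - (i : ℤ)) 1 - qp ((k : ℤ) + (i : ℤ)) (-1))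

lemma vermaCoeff_add (n m i : ℕ) :
    vermaCoeff (n + m) i = vermaCoeff m i * vermaCoeff n (i + m) := by
  rw [vermaCoeff, add_comm n m, Finset.prod_range_add, vermaCoeff, vermaCoeff]
  congr 1
  refine Finset.prod_congr rfl fun k _ => ?_
  push_cast
  ring_nf

theorem stmt1_general
    -- the balanced Gaussian binomial coefficients, given by their defining property
    (C : ℕ → ℕ → Rqs)
    (hC : ∀ a b : ℕ, b ≤ a → C a b * qfact b * qfact (a - b) = qfact a)
    -- the operators on the generic Verma module, determined on the basis
    (F : ℕ → Module.End Rqs Vhat)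
    (hF : ∀ n i : ℕ, 1 ≤ n → F n (v i) =
      (C (n + i) i *
        ∏ k ∈ Finset.range n, (qp (-(k : ℤ) - (i : ℤ)) 1 - qp ((k : ℤ) + (i : ℤ)) (-1))) • v (i + n)) :
    ∀ n m : ℕ, 1 ≤ n → 1 ≤ m → F n ∘ₗ F m = C (n + m) n • F (n + m) := by
  intro n m hn hm
  have hF' : ∀ n i, 1 ≤ n → F n (v i) = (C (n + i) i * vermaCoeff n i) • v (i + n) := hF
  have hbinom := binom_mul_binom_of_mul_factorials qfact qfact_ne_zero C hC
  refine Finsupp.basisSingleOne.ext fun i => ?_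
  change F n (F m (v i)) = C (n + m) n • F (n + m) (v i)
  rw [hF' m i hm, map_smul, hF' n (i + m) hn, hF' (n + m) i (by omega), smul_smul, smul_smul,
    vermaCoeff_add, show i + m + n = i + (n + m) by omega]
  congr 1
  linear_combination vermaCoeff m i * vermaCoeff n (i + m) * hbinom i m n

theorem stmt1
    -- the balanced Gaussian binomial coefficients, given by their defining property
    (C : ℕ → ℕ → Rqs)
    (hC : ∀ a b : ℕ, b ≤ a → C a b * qfact b * qfact (a - b) = qfact a)
    -- the operators on the generic Verma module, determined on the basis
    (K Kinv E : Module.End Rqs Vhat) (F : ℕ → Module.End Rqs Vhat)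
    (hK : ∀ i : ℕ, K (v i) = qp (-2 * (i : ℤ)) 1 • v i)
    (hKinv : ∀ i : ℕ, Kinv (v i) = qp (2 * (i : ℤ)) (-1) • v i)
    (hE0 : E (v 0) = 0)
    (hE : ∀ i : ℕ, E (v (i + 1)) = v i)
    (hF0 : F 0 = LinearMap.id)
    (hF : ∀ n i : ℕ, 1 ≤ n → F n (v i) =
      (C (n + i) i *
        ∏ k ∈ Finset.range n, (qp (-(k : ℤ) - (i : ℤ)) 1 - qp ((k : ℤ) + (i : ℤ)) (-1))) • v (i + n)) :
    ∀ n m : ℕ, 1 ≤ n → 1 ≤ m → F n ∘ₗ F m = C (n + m) n • F (n + m) :=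
  stmt1_general C hC F hF

end ADO
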